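/- Let κ be an infinite cardinal and let Col(ω, κ) be the poset of finite partial functions from ω to κ, ordered by reverse inclusion (p ≤ q iff p extends q). Then the regular open algebra R.O.(Col(ω, κ)) — the complete Boolean algebra of regular open subsets of Col(ω, κ) in the topology generated by the principal down-sets O_p = {q : q ≤ p}, ordered by inclusion — is countably generated: there exists a countable set X of regular open subsets such that the only complete Boolean subalgebra of R.O.(Col(ω, κ)) containing X is R.O.(Col(ω, κ)) itself. -/

import Mathlib

/-!
Fix a well-order `<` on `α` and let `ġ : ℕ → α` be the generic function, so that
`⟦ġ(n) = a⟧ = {p | p n = a}` (regular open because `α` has a second element). The countably many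
values `⟦ġ(m) < ġ(k)⟧` generate the algebra. By well-founded induction on `a`, every
`⟦ġ(n) = a⟧` is generated: a condition forces `ġ(n) = a` iff it forces `ġ(n) ≮ a` and that no
`ġ(m)` with `ġ(m) ≮ a` lies below `ġ(n)`, for a condition deciding `ġ(n) = b > a` can be extended
by `a` at a fresh coordinate `m`. Then `O_p` is the meet of the `⟦ġ(n) = a⟧` with `p n = a`, and
every regular open set is the join of the `O_p` it contains.
-/

universe u

open Cardinal

/-- `Col α` (for `#α = κ`, this is `Col(ω, κ)`): finite partial functions from `ℕ`
to `α`, represented as functions `ℕ → Option α` with finite support. -/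
structure Col (α : Type u) where
  toFun : ℕ → Option α
  finite : {n : ℕ | toFun n ≠ none}.Finite

/-- `Col α` is ordered by reverse inclusion: `p ≤ q` iff `p` extends `q`. -/
instance Col.instPartialOrder (α : Type u) : PartialOrder (Col α) where
  le p q := ∀ (n : ℕ) (a : α), q.toFun n = some a → p.toFun n = some a
  le_refl p := fun _ _ h => h
  le_trans p q r hpq hqr := fun n a h => hpq n a (hqr n a h)
  le_antisymm p q hpq hqp := by
    have h : p.toFun = q.toFun := by
      funext n
      cases hq : q.toFun n with
      | some a => exact hpq n a hq
      | none =>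
        cases hp : p.toFun n with
        | some a =>
          exact absurd (hqp n a hp) (by rw [hq]; simp)
        | none => rfl
    cases p with
    | mk pf pfin =>
      cases q with
      | mk qf qfin =>
        congr 1

/-- The topology on `Col α` generated by the principal down-sets
`O_p = {q : q ≤ p}`. -/
instance Col.instTopologicalSpace (α : Type u) : TopologicalSpace (Col α) :=
  TopologicalSpace.generateFrom {S : Set (Col α) | ∃ p : Col α, S = {q : Col α | q ≤ p}}

/-- The regular open sets of `Col α`: sets equal to the interior of their closure.
These form the regular open algebra `R.O.(Col(ω, κ))`. -/
structure RegOpen (α : Type u) where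
  carrier : Set (Col α)
  regular : interior (closure carrier) = carrier

/-- A subset `S` of a complete Boolean algebra `B` is a *complete Boolean subalgebra*
if it contains `⊥` and `⊤`, and is closed under complementation and under
arbitrary suprema and infima. -/
def IsCompleteSubalgebra {B : Type u} [CompleteBooleanAlgebra B] (S : Set B) : Prop :=
  ⊥ ∈ S ∧ ⊤ ∈ S ∧ (∀ b ∈ S, bᶜ ∈ S) ∧
    (∀ T : Set B, T ⊆ S → sSup T ∈ S) ∧ (∀ T : Set B, T ⊆ S → sInf T ∈ S)

/-- A complete Boolean algebra `B` is *countably generated* if there is a countable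
subset `X ⊆ B` such that the only complete Boolean subalgebra of `B` containing `X`
is `B` itself. -/
def CountablyGeneratedCBA (B : Type u) [CompleteBooleanAlgebra B] : Prop :=
  ∃ X : Set B, X.Countable ∧
    ∀ S : Set B, IsCompleteSubalgebra S → X ⊆ S → S = Set.univ

open Set Topology TopologicalSpace

section RegularOpen

variable {X : Type*} [TopologicalSpace X] {s t : Set X}

def IsRegularOpen (s : Set X) : Prop := interior (closure s) = s

theorem IsRegularOpen.isOpen (hs : IsRegularOpen s) : IsOpen s := hs ▸ isOpen_interior

theorem IsRegularOpen.interior_closure_subset (ht : IsRegularOpen t) (h : s ⊆ t) :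
    interior (closure s) ⊆ t :=
  (interior_mono (closure_mono h)).trans ht.le

theorem IsRegularOpen.subset_interior_closure (hs : IsRegularOpen s) (h : s ⊆ t) :
    s ⊆ interior (closure t) :=
  hs.ge.trans (interior_mono (closure_mono h))

theorem isRegularOpen_interior_closure (s : Set X) : IsRegularOpen (interior (closure s)) :=
  interior_closure_idem

theorem isRegularOpen_univ : IsRegularOpen (Set.univ : Set X) := by
  simp [IsRegularOpen]

theorem isRegularOpen_empty : IsRegularOpen (∅ : Set X) := by
  simp [IsRegularOpen]

theorem IsRegularOpen.inter (hs : IsRegularOpen s) (ht : IsRegularOpen t) :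
    IsRegularOpen (s ∩ t) :=
  (subset_inter (hs.interior_closure_subset inter_subset_left)
    (ht.interior_closure_subset inter_subset_right)).antisymm
    (hs.isOpen.inter ht.isOpen).subset_interior_closure

theorem isRegularOpen_iInter [AlexandrovDiscrete X] {ι : Sort*} {f : ι → Set X}
    (hf : ∀ i, IsRegularOpen (f i)) : IsRegularOpen (⋂ i, f i) :=
  (subset_iInter fun i => (hf i).interior_closure_subset (iInter_subset f i)).antisymm
    (isOpen_iInter fun i => (hf i).isOpen).subset_interior_closure

theorem IsOpen.isRegularOpen_interior_compl (hs : IsOpen s) : IsRegularOpen (interior sᶜ) := by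
  rw [IsRegularOpen, interior_compl, closure_compl, interior_compl, ← hs.interior_eq,
    closure_interior_idem]

theorem IsOpen.inter_interior_closure_subset (hs : IsOpen s) :
    s ∩ interior (closure t) ⊆ interior (closure (s ∩ t)) :=
  calc s ∩ interior (closure t) = interior (s ∩ closure t) := by
        rw [interior_inter, hs.interior_eq]
    _ ⊆ interior (closure (s ∩ t)) := interior_mono hs.inter_closure

theorem interior_closure_union_interior_compl (s : Set X) :
    interior (closure (s ∪ interior sᶜ)) = Set.univ := by
  have hdense : closure (s ∪ interior sᶜ) = Set.univ := by
    rw [closure_union, interior_compl]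
    exact eq_univ_of_univ_subset
      ((union_compl_self _).ge.trans (union_subset_union_right _ subset_closure))
  rw [hdense, interior_univ]

end RegularOpen

theorem generateFrom_Iic_eq_lowerSet (P : Type*) [Preorder P] :
    generateFrom {S : Set P | ∃ p, S = {q | q ≤ p}} = Topology.lowerSet P := by
  refine le_antisymm (fun s hs => ?_) (le_generateFrom_iff_subset_isOpen.2 ?_)
  · have hs : IsLowerSet s := hs
    have hunion : s = ⋃ p ∈ s, {q | q ≤ p} := Set.ext fun q =>
      ⟨fun hq => mem_iUnion₂.2 ⟨q, hq, le_rfl⟩, fun h =>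
        let ⟨_, hp, hqp⟩ := mem_iUnion₂.1 h; hs hqp hp⟩
    let := generateFrom {S : Set P | ∃ p, S = {q | q ≤ p}}
    rw [hunion]
    exact isOpen_biUnion fun p _ => isOpen_generateFrom_of_mem ⟨p, rfl⟩
  · rintro _ ⟨p, rfl⟩
    exact isLowerSet_Iic p

namespace Topology.IsLowerSet

variable {P : Type*} [Preorder P] [TopologicalSpace P] [Topology.IsLowerSet P] {s : Set P} {q : P}

theorem mem_interior_iff : q ∈ interior s ↔ ∀ r ≤ q, r ∈ s := by
  rw [← compl_compl s, interior_compl, closure_eq_upperClosure]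
  simp [not_imp_not]

theorem mem_interior_closure_iff : q ∈ interior (closure s) ↔ ∀ r ≤ q, ∃ t ≤ r, t ∈ s := by
  simp [mem_interior_iff, closure_eq_upperClosure, and_comm]

end Topology.IsLowerSet

namespace Col

variable {α : Type u}

instance instIsLowerSet : Topology.IsLowerSet (Col α) :=
  ⟨generateFrom_Iic_eq_lowerSet (Col α)⟩

theorem exists_toFun_eq_none (q : Col α) : ∃ m, q.toFun m = none := by
  obtain ⟨m, hm⟩ := q.finite.infinite_compl.nonempty
  exact ⟨m, not_not.mp hm⟩

def update (q : Col α) (n : ℕ) (a : α) : Col α where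
  toFun := Function.update q.toFun n (some a)
  finite := (q.finite.insert n).subset fun m hm => by
    rcases eq_or_ne m n with rfl | hmn
    · exact mem_insert m _
    · exact mem_insert_of_mem n (by simpa [Function.update_of_ne hmn] using hm)

theorem update_toFun_self (q : Col α) (n : ℕ) (a : α) : (q.update n a).toFun n = some a :=
  Function.update_self ..

theorem update_le {q : Col α} {n : ℕ} (hn : q.toFun n = none) (a : α) : q.update n a ≤ q :=
  fun m b hm => by
    have hmn : m ≠ n := by rintro rfl; simp [hn] at hm
    simpa [update, Function.update_of_ne hmn] using hm

theorem exists_le_toFun_eq_ne [Nontrivial α] {q : Col α} {n : ℕ} {a : α}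
    (h : q.toFun n ≠ some a) : ∃ r ≤ q, ∃ b ≠ a, r.toFun n = some b := by
  cases hqn : q.toFun n with
  | some b => exact ⟨q, le_rfl, b, fun hba => h (hba ▸ hqn), hqn⟩
  | none =>
    obtain ⟨b, hb⟩ := exists_ne a
    exact ⟨q.update n b, update_le hqn b, b, hb, update_toFun_self q n b⟩

theorem isRegularOpen_setOf_toFun_eq [Nontrivial α] (n : ℕ) (a : α) :
    IsRegularOpen {p : Col α | p.toFun n = some a} := by
  have hopen : IsOpen {p : Col α | p.toFun n = some a} :=
    IsLowerSet.isOpen_iff_isLowerSet.2 fun _ _ hpq hp => hpq n a hp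
  refine subset_antisymm (fun q hq => ?_) hopen.subset_interior_closure
  by_contra hqa
  obtain ⟨r, hrq, b, hba, hrb⟩ := exists_le_toFun_eq_ne hqa
  obtain ⟨t, htr, hta⟩ := IsLowerSet.mem_interior_closure_iff.1 hq r hrq
  exact hba (Option.some.inj ((htr n b hrb).symm.trans hta))

end Col

namespace RegOpen

variable {α : Type u}

instance : SetLike (RegOpen α) (Col α) where
  coe := carrier
  coe_injective U V h := by cases U; cases V; congr

instance : PartialOrder (RegOpen α) := .ofSetLike (RegOpen α) (Col α)

theorem isRegularOpen (U : RegOpen α) : IsRegularOpen (U : Set (Col α)) := U.regular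

theorem isLowerSet (U : RegOpen α) : IsLowerSet (U : Set (Col α)) :=
  IsLowerSet.isOpen_iff_isLowerSet.1 U.isRegularOpen.isOpen

def regularize (s : Set (Col α)) : RegOpen α :=
  ⟨interior (closure s), isRegularOpen_interior_closure s⟩

theorem regularize_le {s : Set (Col α)} {U : RegOpen α} (h : s ⊆ U) : regularize s ≤ U :=
  U.isRegularOpen.interior_closure_subset h

theorem le_regularize {s : Set (Col α)} {U : RegOpen α} (h : (U : Set (Col α)) ⊆ s) :
    U ≤ regularize s :=
  U.isRegularOpen.subset_interior_closure h

instance : CompleteLattice (RegOpen α) where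
  sup U V := regularize (U ∪ V)
  le_sup_left _ _ := le_regularize subset_union_left
  le_sup_right _ _ := le_regularize subset_union_right
  sup_le _ _ _ hU hV := regularize_le (union_subset hU hV)
  inf U V := ⟨U ∩ V, U.isRegularOpen.inter V.isRegularOpen⟩
  inf_le_left _ _ := inter_subset_left
  inf_le_right _ _ := inter_subset_right
  le_inf _ _ _ := subset_inter
  sSup T := regularize (⋃ U ∈ T, U)
  isLUB_sSup _ := ⟨fun _ hU => le_regularize (subset_biUnion_of_mem hU),
    fun _ hW => regularize_le (iUnion₂_subset hW)⟩
  sInf T := ⟨⋂ U ∈ T, U, isRegularOpen_iInter fun U => isRegularOpen_iInter fun _ =>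
    U.isRegularOpen⟩
  isGLB_sInf _ := ⟨fun _ hU => biInter_subset_of_mem hU, fun _ hW => subset_iInter₂ hW⟩
  top := ⟨Set.univ, isRegularOpen_univ⟩
  le_top _ := subset_univ _
  bot := ⟨∅, isRegularOpen_empty⟩
  bot_le _ := empty_subset _

protected theorem inf_sup_le (U V W : RegOpen α) : U ⊓ (V ⊔ W) ≤ U ⊓ V ⊔ U ⊓ W := by
  change (U : Set (Col α)) ∩ interior (closure (V ∪ W)) ⊆ interior (closure (U ∩ V ∪ U ∩ W))
  rw [← inter_union_distrib_left]
  exact U.isRegularOpen.isOpen.inter_interior_closure_subset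

instance : CompleteBooleanAlgebra (RegOpen α) where
  __ := (inferInstance : CompleteLattice (RegOpen α))
  __ := DistribLattice.ofInfSupLe RegOpen.inf_sup_le
  compl U :=
    ⟨interior (U : Set (Col α))ᶜ, U.isRegularOpen.isOpen.isRegularOpen_interior_compl⟩
  inf_compl_le_bot _ _ h := interior_subset h.2 h.1
  top_le_sup_compl U := (interior_closure_union_interior_compl (U : Set (Col α))).ge

theorem mem_inf {U V : RegOpen α} {q : Col α} : q ∈ U ⊓ V ↔ q ∈ U ∧ q ∈ V := Iff.rfl

theorem mem_compl_iff {U : RegOpen α} {q : Col α} : q ∈ Uᶜ ↔ ∀ r ≤ q, r ∉ U :=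
  IsLowerSet.mem_interior_iff

theorem mem_sSup_iff {T : Set (RegOpen α)} {q : Col α} :
    q ∈ sSup T ↔ ∀ r ≤ q, ∃ t ≤ r, ∃ U ∈ T, t ∈ U := by
  change q ∈ interior (closure (⋃ U ∈ T, (U : Set (Col α)))) ↔ _
  simp only [IsLowerSet.mem_interior_closure_iff, mem_iUnion₂, SetLike.mem_coe, exists_prop]

theorem mem_iSup_iff {ι : Sort*} {f : ι → RegOpen α} {q : Col α} :
    q ∈ ⨆ i, f i ↔ ∀ r ≤ q, ∃ t ≤ r, ∃ i, t ∈ f i := by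
  simp [iSup, mem_sSup_iff]

theorem mem_iInf_iff {ι : Sort*} {f : ι → RegOpen α} {q : Col α} :
    q ∈ ⨅ i, f i ↔ ∀ i, q ∈ f i := by
  change q ∈ ⋂ U ∈ range f, (U : Set (Col α)) ↔ _
  simp

end RegOpen

namespace IsCompleteSubalgebra

variable {B : Type u} [CompleteBooleanAlgebra B] {S : Set B}

theorem compl_mem (hS : IsCompleteSubalgebra S) {b : B} (hb : b ∈ S) : bᶜ ∈ S :=
  hS.2.2.1 b hb

theorem sSup_mem (hS : IsCompleteSubalgebra S) {T : Set B} (hT : T ⊆ S) : sSup T ∈ S :=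
  hS.2.2.2.1 T hT

theorem iSup_mem (hS : IsCompleteSubalgebra S) {ι : Sort*} {f : ι → B} (hf : ∀ i, f i ∈ S) :
    ⨆ i, f i ∈ S :=
  hS.sSup_mem (range_subset_iff.2 hf)

theorem iInf_mem (hS : IsCompleteSubalgebra S) {ι : Sort*} {f : ι → B} (hf : ∀ i, f i ∈ S) :
    ⨅ i, f i ∈ S :=
  hS.2.2.2.2 _ (range_subset_iff.2 hf)

theorem inf_mem (hS : IsCompleteSubalgebra S) {a b : B} (ha : a ∈ S) (hb : b ∈ S) :
    a ⊓ b ∈ S := by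
  rw [inf_eq_iInf]
  exact hS.iInf_mem (Bool.forall_bool.2 ⟨hb, ha⟩)

end IsCompleteSubalgebra

namespace RegOpen

variable {α : Type u} [Nontrivial α]

-- `valueEq n a`, `valueLt m a` and `valuesLt m k` are the Boolean values `⟦ġ(n) = a⟧`,
-- `⟦ġ(m) < a⟧` and `⟦ġ(m) < ġ(k)⟧`; `principal p` is `O_p`.
def valueEq (n : ℕ) (a : α) : RegOpen α :=
  ⟨{p | p.toFun n = some a}, Col.isRegularOpen_setOf_toFun_eq n a⟩

theorem mem_valueEq {p : Col α} {n : ℕ} {a : α} : p ∈ valueEq n a ↔ p.toFun n = some a :=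
  Iff.rfl

def principal (p : Col α) : RegOpen α := ⨅ (n) (a) (_ : p.toFun n = some a), valueEq n a

theorem mem_principal_iff {p q : Col α} : q ∈ principal p ↔ q ≤ p := by
  simp only [principal, mem_iInf_iff, mem_valueEq]
  rfl

theorem eq_iSup_principal (U : RegOpen α) : U = ⨆ p ∈ U, principal p :=
  le_antisymm
    (fun q hq => SetLike.le_def.1 (le_iSup₂ (f := fun p (_ : p ∈ U) => principal p) q hq)
      (mem_principal_iff.2 le_rfl))
    (iSup₂_le fun _ hp _ hq => U.isLowerSet (mem_principal_iff.1 hq) hp)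

theorem eq_univ_of_valueEq_mem {S : Set (RegOpen α)} (hS : IsCompleteSubalgebra S)
    (h : ∀ n a, valueEq n a ∈ S) : S = Set.univ := by
  have hprincipal (p : Col α) : principal p ∈ S :=
    hS.iInf_mem fun n => hS.iInf_mem fun a => hS.iInf_mem fun _ => h n a
  exact eq_univ_of_forall fun U => (eq_iSup_principal U).symm ▸
    hS.iSup_mem fun p => hS.iSup_mem fun _ => hprincipal p

variable [LinearOrder α]

def valueLt (m : ℕ) (a : α) : RegOpen α := sSup (valueEq m '' Iio a)

def valuesLt (m k : ℕ) : RegOpen α :=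
  sSup ((fun bc : α × α => valueEq m bc.1 ⊓ valueEq k bc.2) '' {bc | bc.1 < bc.2})

theorem valueEq_le_valueLt {m : ℕ} {a b : α} (hba : b < a) : valueEq m b ≤ valueLt m a :=
  le_sSup (mem_image_of_mem _ hba)

theorem valueEq_inf_valueEq_le_valuesLt {m k : ℕ} {b c : α} (hbc : b < c) :
    valueEq m b ⊓ valueEq k c ≤ valuesLt m k :=
  le_sSup ⟨(b, c), hbc, rfl⟩

theorem mem_valueLt_iff {q : Col α} {m : ℕ} {a : α} :
    q ∈ valueLt m a ↔ ∀ r ≤ q, ∃ t ≤ r, ∃ b < a, t.toFun m = some b := by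
  simp [valueLt, mem_sSup_iff, mem_valueEq]

theorem mem_valuesLt_iff {q : Col α} {m k : ℕ} :
    q ∈ valuesLt m k ↔
      ∀ r ≤ q, ∃ t ≤ r, ∃ b c, b < c ∧ t.toFun m = some b ∧ t.toFun k = some c := by
  simp [valuesLt, mem_sSup_iff, mem_inf, mem_valueEq]

theorem mem_compl_valueLt {q : Col α} {m : ℕ} {a c : α} (hqc : q.toFun m = some c)
    (hac : a ≤ c) : q ∈ (valueLt m a)ᶜ := by
  refine mem_compl_iff.2 fun r hrq hr => ?_
  obtain ⟨t, htr, b, hba, htb⟩ := mem_valueLt_iff.1 hr r le_rfl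
  have hbc : b = c := Option.some.inj (htb.symm.trans ((htr.trans hrq) m c hqc))
  exact (hbc ▸ hba).not_ge hac

theorem valueEq_eq_compl_inf_compl_iSup (n : ℕ) (a : α) :
    valueEq n a = (valueLt n a)ᶜ ⊓ (⨆ m, (valueLt m a)ᶜ ⊓ valuesLt m n)ᶜ := by
  refine le_antisymm (fun q hq => ?_) fun q ⟨hqn, hqm⟩ => ?_
  · refine ⟨mem_compl_valueLt hq le_rfl, mem_compl_iff.2 fun r hrq hr => ?_⟩
    obtain ⟨t, htr, m, htm, htn⟩ := mem_iSup_iff.1 hr r le_rfl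
    obtain ⟨t', ht't, b, c, hbc, ht'b, ht'c⟩ := mem_valuesLt_iff.1 htn t le_rfl
    have hca : c = a :=
      Option.some.inj (ht'c.symm.trans ((ht't.trans (htr.trans hrq)) n a hq))
    exact mem_compl_iff.1 htm t' ht't (valueEq_le_valueLt (hca ▸ hbc) ht'b)
  · by_contra hqa
    obtain ⟨r, hrq, b, hba, hrb⟩ := Col.exists_le_toFun_eq_ne hqa
    have hab : a < b := lt_of_le_of_ne
      (not_lt.1 fun hlt => mem_compl_iff.1 hqn r hrq (valueEq_le_valueLt hlt hrb)) hba.symm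
    obtain ⟨m, hm⟩ := r.exists_toFun_eq_none
    have hr'r := Col.update_le hm a
    have hr' : r.update m a ∈ (valueLt m a)ᶜ ⊓ valuesLt m n :=
      ⟨mem_compl_valueLt (Col.update_toFun_self r m a) le_rfl,
        valueEq_inf_valueEq_le_valuesLt hab ⟨Col.update_toFun_self r m a, hr'r n b hrb⟩⟩
    exact mem_compl_iff.1 hqm _ (hr'r.trans hrq)
      (le_iSup (fun m => (valueLt m a)ᶜ ⊓ valuesLt m n) m hr')

theorem valueEq_mem [WellFoundedLT α] {S : Set (RegOpen α)} (hS : IsCompleteSubalgebra S)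
    (h : ∀ m k, valuesLt m k ∈ S) (n : ℕ) (a : α) : valueEq n a ∈ S := by
  induction a using WellFoundedLT.induction generalizing n with
  | _ a ih =>
    have hlt (m : ℕ) : valueLt m a ∈ S := hS.sSup_mem (image_subset_iff.2 fun b hb => ih b hb m)
    rw [valueEq_eq_compl_inf_compl_iSup]
    exact hS.inf_mem (hS.compl_mem (hlt n))
      (hS.compl_mem (hS.iSup_mem fun m => hS.inf_mem (hS.compl_mem (hlt m)) (h m n)))

end RegOpen

/-- For every infinite cardinal `κ`, the regular open algebra `R.O.(Col(ω, κ))`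
(a complete Boolean algebra under inclusion) is countably generated. -/
theorem regularOpenAlgebra_collapse_countably_generated (κ : Cardinal.{u})
    (hκ : Cardinal.aleph0 ≤ κ) (α : Type u) (hα : #α = κ) :
    ∃ inst : CompleteBooleanAlgebra (RegOpen α),
      (∀ U V : RegOpen α, inst.le U V ↔ U.carrier ⊆ V.carrier) ∧
      @CountablyGeneratedCBA (RegOpen α) inst := by
  have : Infinite α := Cardinal.infinite_iff.2 (hα ▸ hκ)
  obtain ⟨_, _⟩ := exists_wellFoundedLT α
  refine ⟨inferInstance, fun _ _ => Iff.rfl, range fun mk : ℕ × ℕ => RegOpen.valuesLt mk.1 mk.2,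
    countable_range _, fun S hS hX => ?_⟩
  exact RegOpen.eq_univ_of_valueEq_mem hS
    (RegOpen.valueEq_mem hS fun m k => hX ⟨(m, k), rfl⟩)
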